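/- arXiv:1906.01859 — 2 statements merged into one kernel-verified Lean document; each statement's English description precedes it below -/
import Mathlib

section
/- For every standard normal random variable Z and every t ≥ 0, (1/√(2π)) · (1/(t+1)) · e^{-t²/2} ≤ Pr[Z ≥ t] ≤ (1/√π) · (1/(t+1)) · e^{-t²/2}. -/
/-! Write `φ(x) = e^{-x²/2}`. For `x > -1`,
`-(d/dx) (φ(x) / (x + 1)) = φ(x) · (x² + x + 1) / (x + 1)²`, and the rational factor is at least
`3/4` (as `4(x² + x + 1) - 3(x + 1)² = (x - 1)²`) and, for `x ≥ 0`, at most `1`.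
Integrating over `(t, ∞)` squeezes `∫_t^∞ φ` between `φ(t) / (t + 1)` and `(4/3) φ(t) / (t + 1)`,
and `4/3 ≤ √2` turns the normalising constant `1/√(2π)` into `1/√π`. -/

open Real MeasureTheory ProbabilityTheory Filter Set Topology

lemma gaussianReal_zero_one_toReal (s : Set ℝ) :
    (gaussianReal 0 1 s).toReal = (√(2 * π))⁻¹ * ∫ x in s, exp (-x ^ 2 / 2) := by
  rw [gaussianReal_apply_eq_integral 0 one_ne_zero,
    ENNReal.toReal_ofReal (integral_nonneg fun x => gaussianPDFReal_nonneg 0 1 x),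
    ← integral_const_mul]
  simp [gaussianPDFReal]

lemma integrable_exp_neg_sq_div_two : Integrable fun x : ℝ => exp (-x ^ 2 / 2) :=
  (integrable_exp_neg_mul_sq (by norm_num : (0 : ℝ) < 1 / 2)).congr
    (Eventually.of_forall fun x => by ring_nf)

lemma sq_add_self_add_one_div_le_one {x : ℝ} (hx : 0 ≤ x) : (x ^ 2 + x + 1) / (x + 1) ^ 2 ≤ 1 := by
  rw [div_le_one (by positivity)]
  nlinarith

lemma three_div_four_le_sq_add_self_add_one_div {x : ℝ} (hx : x + 1 ≠ 0) :
    3 / 4 ≤ (x ^ 2 + x + 1) / (x + 1) ^ 2 := by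
  rw [le_div_iff₀ (by positivity)]
  nlinarith [sq_nonneg (x - 1)]

lemma hasDerivAt_neg_exp_neg_sq_div_add_one {x : ℝ} (hx : x + 1 ≠ 0) :
    HasDerivAt (fun y => -(exp (-y ^ 2 / 2) / (y + 1)))
      (exp (-x ^ 2 / 2) * ((x ^ 2 + x + 1) / (x + 1) ^ 2)) x := by
  have hsq : HasDerivAt (fun y : ℝ => -y ^ 2 / 2) (-x) x :=
    ((hasDerivAt_pow 2 x).neg.div_const 2).congr_deriv (by ring)
  refine (hsq.exp.div ((hasDerivAt_id x).add_const 1) hx).neg.congr_deriv ?_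
  simp only [id]
  field_simp
  ring

lemma tendsto_exp_neg_sq_div_add_one_atTop :
    Tendsto (fun y => exp (-y ^ 2 / 2) / (y + 1)) atTop (𝓝 0) := by
  have hexp : Tendsto (fun y : ℝ => exp (-y ^ 2 / 2)) atTop (𝓝 0) :=
    tendsto_exp_atBot.comp <|
      (tendsto_neg_atBot_iff.mpr (tendsto_pow_atTop two_ne_zero)).atBot_div_const two_pos
  simpa [div_eq_mul_inv] using
    hexp.mul (tendsto_atTop_add_const_right _ 1 tendsto_id).inv_tendsto_atTop

lemma exp_neg_sq_mul_ratio_nonneg {x : ℝ} (hx : x + 1 ≠ 0) :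
    0 ≤ exp (-x ^ 2 / 2) * ((x ^ 2 + x + 1) / (x + 1) ^ 2) :=
  mul_nonneg (exp_pos _).le ((by norm_num : (0 : ℝ) ≤ 3 / 4).trans (three_div_four_le_sq_add_self_add_one_div hx))

lemma integrableOn_Ioi_exp_neg_sq_mul_ratio {t : ℝ} (ht : -1 < t) :
    IntegrableOn (fun x => exp (-x ^ 2 / 2) * ((x ^ 2 + x + 1) / (x + 1) ^ 2)) (Ioi t) :=
  integrableOn_Ioi_deriv_of_nonneg'
    (fun x hx => hasDerivAt_neg_exp_neg_sq_div_add_one (by linarith [hx.out]))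
    (fun x hx => exp_neg_sq_mul_ratio_nonneg (by linarith [hx.out]))
    (by simpa using tendsto_exp_neg_sq_div_add_one_atTop.neg)

lemma integral_Ioi_exp_neg_sq_mul_ratio {t : ℝ} (ht : -1 < t) :
    ∫ x in Ioi t, exp (-x ^ 2 / 2) * ((x ^ 2 + x + 1) / (x + 1) ^ 2)
      = exp (-t ^ 2 / 2) / (t + 1) := by
  rw [integral_Ioi_of_hasDerivAt_of_nonneg'
    (fun x hx => hasDerivAt_neg_exp_neg_sq_div_add_one (by linarith [hx.out]))
    (fun x hx => exp_neg_sq_mul_ratio_nonneg (by linarith [hx.out]))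
    (by simpa using tendsto_exp_neg_sq_div_add_one_atTop.neg)]
  ring

lemma exp_neg_sq_div_add_one_le_integral_Ioi {t : ℝ} (ht : 0 ≤ t) :
    exp (-t ^ 2 / 2) / (t + 1) ≤ ∫ x in Ioi t, exp (-x ^ 2 / 2) := by
  have ht' : -1 < t := by linarith
  rw [← integral_Ioi_exp_neg_sq_mul_ratio ht']
  refine setIntegral_mono_on (integrableOn_Ioi_exp_neg_sq_mul_ratio ht')
    integrable_exp_neg_sq_div_two.integrableOn measurableSet_Ioi fun x hx => ?_
  exact mul_le_of_le_one_right (exp_pos _).le (sq_add_self_add_one_div_le_one (ht.trans hx.out.le))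

lemma integral_Ioi_exp_neg_sq_le {t : ℝ} (ht : -1 < t) :
    ∫ x in Ioi t, exp (-x ^ 2 / 2) ≤ 4 / 3 * (exp (-t ^ 2 / 2) / (t + 1)) := by
  rw [← integral_Ioi_exp_neg_sq_mul_ratio ht, ← integral_const_mul]
  refine setIntegral_mono_on integrable_exp_neg_sq_div_two.integrableOn
    ((integrableOn_Ioi_exp_neg_sq_mul_ratio ht).const_mul _) measurableSet_Ioi fun x hx => ?_
  have hratio := three_div_four_le_sq_add_self_add_one_div (by linarith [hx.out] : x + 1 ≠ 0)
  have hexp := exp_pos (-x ^ 2 / 2)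
  nlinarith

/-- Szarek-style two-sided bounds on the upper tail of a standard normal random variable:
`(1/√(2π)) · (1/(t+1)) · e^{-t²/2} ≤ Pr[Z ≥ t] ≤ (1/√π) · (1/(t+1)) · e^{-t²/2}` for `t ≥ 0`. -/
theorem stmt_2 (t : ℝ) (ht : 0 ≤ t) :
    (1 / Real.sqrt (2 * π)) * (1 / (t + 1)) * Real.exp (-t ^ 2 / 2)
        ≤ ((gaussianReal 0 1) (Set.Ici t)).toReal ∧
    ((gaussianReal 0 1) (Set.Ici t)).toReal
        ≤ (1 / Real.sqrt π) * (1 / (t + 1)) * Real.exp (-t ^ 2 / 2) := by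
  rw [gaussianReal_zero_one_toReal, integral_Ici_eq_integral_Ioi]
  have hlower := exp_neg_sq_div_add_one_le_integral_Ioi ht
  have hupper := integral_Ioi_exp_neg_sq_le (by linarith : -1 < t)
  have hsqrt2 : 4 / 3 ≤ √2 := (le_sqrt (by norm_num) zero_le_two).mpr (by norm_num)
  constructor
  · calc 1 / √(2 * π) * (1 / (t + 1)) * exp (-t ^ 2 / 2)
        = (√(2 * π))⁻¹ * (exp (-t ^ 2 / 2) / (t + 1)) := by ring
      _ ≤ _ := by gcongr
  · calc (√(2 * π))⁻¹ * ∫ x in Ioi t, exp (-x ^ 2 / 2)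
        ≤ (√(2 * π))⁻¹ * (√2 * (exp (-t ^ 2 / 2) / (t + 1))) := by
          gcongr
          exact hupper.trans (by gcongr)
      _ = 1 / √π * (1 / (t + 1)) * exp (-t ^ 2 / 2) := by
          rw [sqrt_mul zero_le_two π]
          field_simp
end

section
/- Let n ≥ 1 and let R be a uniformly random element of {r₀, r₀+1, …, n} for some 1 ≤ r₀ ≤ n. Consider a bijection π of {1,…,n} and form π' by swapping the values at positions so that the element previously at rank r₀ now has rank R and vice versa. If π restricted to a set B (with the element of rank r₀ belonging to B) is such that, conditioned on the ranks outside {r₀,…,n}, all placements of the remaining elements of B among ranks {r₀+1,…,n} are equally likely, then after the swap all placements of the elements of B among ranks {r₀,…,n} are equally likely. -/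
/-!
Write `m + 1` for the number of ranks `{r₀,…,n}`. For a fixed target set `A` of `k + 1` ranks,
the pairs `(T, R)` that the swap sends to `A` are in bijection with `A` itself: `R` must lie
in `A`, and then `T` is `A` minus `r₀` (if `r₀ ∈ A`) or `A` minus `R` (otherwise). So every `A`
is hit by exactly `k + 1` of the `C(m, k) (m + 1) = C(m + 1, k + 1) (k + 1)` equally likely pairs.
-/

open Finset

section RankSwap

variable {α : Type*} [DecidableEq α]

/-- The ranks occupied by `B` after its element of rank `a` swaps ranks with the element of
rank `TR.2`, when the other elements of `B` occupied the ranks `TR.1`. -/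
def rankSwap (a : α) (TR : Finset α × α) : Finset α :=
  if TR.2 ∈ insert a TR.1 then insert a TR.1 else insert TR.2 TR.1

def rankSwapPreimage (a : α) (A : Finset α) (R : α) : Finset α :=
  if a ∈ A then A.erase a else A.erase R

theorem rankSwap_eq_iff {a R : α} {T A : Finset α} (haT : a ∉ T) :
    rankSwap a (T, R) = A ↔ R ∈ A ∧ T = rankSwapPreimage a A R := by
  unfold rankSwap rankSwapPreimage
  constructor
  · rintro rfl
    by_cases hR : R ∈ insert a T
    · simp [hR, haT]
    · have hRa : R ≠ a := fun h => hR (h ▸ mem_insert_self a T)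
      have hRT : R ∉ T := fun h => hR (mem_insert_of_mem h)
      simp [hR, hRa.symm, haT, hRT]
  · rintro ⟨hRA, rfl⟩
    by_cases haA : a ∈ A
    · simp [haA, hRA]
    · have hRa : R ≠ a := fun h => haA (h ▸ hRA)
      simp [haA, hRa, insert_erase hRA]

theorem rankSwapPreimage_mem_powersetCard {a R : α} {s A : Finset α} {k : ℕ}
    (hA : A ∈ s.powersetCard (k + 1)) (hRA : R ∈ A) :
    rankSwapPreimage a A R ∈ (s.erase a).powersetCard k := by
  rw [mem_powersetCard] at hA ⊢
  unfold rankSwapPreimage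
  split_ifs with haA
  · exact ⟨erase_subset_erase a hA.1, by rw [card_erase_of_mem haA, hA.2, Nat.add_sub_cancel]⟩
  · refine ⟨fun x hx => mem_erase.2 ⟨?_, hA.1 (mem_of_mem_erase hx)⟩, ?_⟩
    · rintro rfl
      exact haA (mem_of_mem_erase hx)
    · rw [card_erase_of_mem hRA, hA.2, Nat.add_sub_cancel]

theorem filter_rankSwap_eq {a : α} {s A : Finset α} {k : ℕ}
    (hA : A ∈ s.powersetCard (k + 1)) :
    ((s.erase a).powersetCard k ×ˢ s).filter (fun TR => rankSwap a TR = A) =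
      A.image (fun R => (rankSwapPreimage a A R, R)) := by
  ext ⟨T, R⟩
  simp only [mem_filter, mem_product, mem_image, Prod.mk.injEq]
  constructor
  · rintro ⟨⟨hT, -⟩, hswap⟩
    have haT : a ∉ T := fun h => by simpa using (mem_powersetCard.1 hT).1 h
    obtain ⟨hRA, rfl⟩ := (rankSwap_eq_iff haT).1 hswap
    exact ⟨R, hRA, rfl, rfl⟩
  · rintro ⟨R, hRA, rfl, rfl⟩
    have hT := rankSwapPreimage_mem_powersetCard (a := a) hA hRA
    have haT : a ∉ rankSwapPreimage a A R := fun h => by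
      simpa using (mem_powersetCard.1 hT).1 h
    exact ⟨⟨hT, (mem_powersetCard.1 hA).1 hRA⟩, (rankSwap_eq_iff haT).2 ⟨hRA, rfl⟩⟩

theorem card_filter_rankSwap_eq {a : α} {s A : Finset α} {k : ℕ}
    (hA : A ∈ s.powersetCard (k + 1)) :
    (((s.erase a).powersetCard k ×ˢ s).filter (fun TR => rankSwap a TR = A)).card = k + 1 := by
  rw [filter_rankSwap_eq hA, card_image_of_injective _ fun _ _ h => (Prod.mk.inj h).2,
    (mem_powersetCard.1 hA).2]

theorem card_powersetCard_erase_product {a : α} {s : Finset α} (ha : a ∈ s) (k : ℕ) :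
    ((s.erase a).powersetCard k ×ˢ s).card = (s.card.choose (k + 1)) * (k + 1) := by
  obtain ⟨m, hm⟩ : ∃ m, s.card = m + 1 := ⟨_, (Nat.succ_pred_eq_of_pos (card_pos.2 ⟨a, ha⟩)).symm⟩
  rw [card_product, card_powersetCard, card_erase_of_mem ha, hm, Nat.add_sub_cancel, mul_comm,
    Nat.add_one_mul_choose_eq]

theorem card_filter_rankSwap_eq_div {a : α} {s A : Finset α} {k : ℕ} (ha : a ∈ s)
    (hA : A ∈ s.powersetCard (k + 1)) :
    ((((s.erase a).powersetCard k ×ˢ s).filter (fun TR => rankSwap a TR = A)).card : ℝ) /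
        (((s.erase a).powersetCard k ×ˢ s).card : ℝ) = 1 / (s.card.choose (k + 1) : ℝ) := by
  rw [card_filter_rankSwap_eq hA, card_powersetCard_erase_product ha, Nat.cast_mul,
    div_mul_cancel_right₀ (by positivity), one_div]

end RankSwap

theorem stmt_7_general (n r₀ k : ℕ) (hrn : r₀ ≤ n)
    (A : Finset ℕ) (hA : A ∈ (Finset.Icc r₀ n).powersetCard (k + 1)) :
    ((((Finset.Icc (r₀ + 1) n).powersetCard k ×ˢ Finset.Icc r₀ n).filter
        (fun TR => (if TR.2 ∈ insert r₀ TR.1 then insert r₀ TR.1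
                    else insert TR.2 TR.1) = A)).card : ℝ) /
      ((((Finset.Icc (r₀ + 1) n).powersetCard k ×ˢ Finset.Icc r₀ n)).card : ℝ)
      = 1 / ((n - r₀ + 1).choose (k + 1) : ℝ) := by
  have hIcc : Finset.Icc (r₀ + 1) n = (Finset.Icc r₀ n).erase r₀ := by
    rw [Icc_erase_left, Icc_add_one_left_eq_Ioc]
  have hcard : n - r₀ + 1 = (Finset.Icc r₀ n).card := by
    rw [Nat.card_Icc]
    omega
  rw [hIcc, hcard]
  exact card_filter_rankSwap_eq_div (left_mem_Icc.2 hrn) hA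

/-- Rank-shuffle invariant. Before the swap, a distinguished element of `B` has rank `r₀`
and the remaining `k` elements of `B` occupy a uniformly random `k`-subset `T` of the ranks
`{r₀+1,…,n}`. A rank `R` is drawn uniformly from `{r₀,…,n}` and the element at rank `r₀` is
swapped with the element at rank `R`: the resulting set of ranks occupied by `B` is
`{r₀} ∪ T` if `R ∈ {r₀} ∪ T` and `{R} ∪ T` otherwise. Then every placement of the elements
of `B` among the ranks `{r₀,…,n}` is equally likely: each `(k+1)`-subset `A` of `{r₀,…,n}`
occurs with probability `1 / C(n-r₀+1, k+1)`. -/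
theorem stmt_7 (n r₀ k : ℕ) (hr₀ : 1 ≤ r₀) (hrn : r₀ ≤ n)
    (hk : k + 1 ≤ n - r₀ + 1)
    (A : Finset ℕ) (hA : A ∈ (Finset.Icc r₀ n).powersetCard (k + 1)) :
    ((((Finset.Icc (r₀ + 1) n).powersetCard k ×ˢ Finset.Icc r₀ n).filter
        (fun TR => (if TR.2 ∈ insert r₀ TR.1 then insert r₀ TR.1
                    else insert TR.2 TR.1) = A)).card : ℝ) /
      ((((Finset.Icc (r₀ + 1) n).powersetCard k ×ˢ Finset.Icc r₀ n)).card : ℝ)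
      = 1 / ((n - r₀ + 1).choose (k + 1) : ℝ) :=
  stmt_7_general n r₀ k hrn A hA
end
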